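/- arXiv:2410.23880 — 3 statements merged into one kernel-verified Lean document; each statement's English description precedes it below -/
import Mathlib

section
/- Let M ≥ 1, let K be a symmetric positive definite real M×M matrix, let 𝟏 ∈ ℝ^M be the all-ones vector, and let y ∈ ℝ^M. For each σ > 0 let x_σ be the unique minimizer over ℝ^M of F_σ(x) = ‖x − y‖₂² + xᵀ(K + σ²·𝟏𝟏ᵀ)⁻¹x. Define A = K⁻¹ − (K⁻¹𝟏)(K⁻¹𝟏)ᵀ/(𝟏ᵀK⁻¹𝟏). Then, as σ → ∞, x_σ converges to the unique minimizer over ℝ^M of G(x) = ‖x − y‖₂² − (1/2)·Σ_{i,j=1}^M (x_i − x_j)²·A_{ij}. -/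
/-!
By the Sherman–Morrison formula, `(K + σ² 𝟏𝟏ᵀ)⁻¹ = K⁻¹ - σ² / (1 + σ² s) • (K⁻¹𝟏)(K⁻¹𝟏)ᵀ` with
`s = 𝟏ᵀK⁻¹𝟏 > 0`, and this tends to `A` as `σ → ∞`. Since `A` is symmetric with `A 𝟏 = 0`, the
pairwise term equals `-2 xᵀAx`, so both objectives are of the form `‖x - y‖² + xᵀQx` with `Q`
positive semidefinite (for `A`, by completing the square in the `K⁻¹` inner product). Such an
objective is minimized exactly at `(1 + Q)⁻¹ y`, which depends continuously on `Q` near `Q = A`.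
-/

open Matrix Filter Topology Finset

theorem tendsto_div_one_add_mul_atTop {s : ℝ} (hs : s ≠ 0) :
    Tendsto (fun t : ℝ => t / (1 + t * s)) atTop (𝓝 s⁻¹) := by
  have h : Tendsto (fun t : ℝ => (t⁻¹ + s)⁻¹) atTop (𝓝 s⁻¹) := by
    simpa using (tendsto_inv_atTop_zero.add_const s).inv₀ (by simpa using hs)
  refine h.congr' ?_
  filter_upwards [eventually_gt_atTop 0] with t ht
  rw [show t⁻¹ + s = (1 + t * s) / t by field_simp, inv_div]

namespace Matrix

variable {n : Type*} [Fintype n]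

theorem IsSymm.dotProduct_mulVec_comm {R : Type*} [CommSemiring R] {A : Matrix n n R}
    (hA : A.IsSymm) (x z : n → R) : x ⬝ᵥ A *ᵥ z = z ⬝ᵥ A *ᵥ x := by
  rw [dotProduct_mulVec, ← mulVec_transpose, hA.eq, dotProduct_comm]

/-- The Sherman–Morrison formula. -/
theorem inv_add_smul_vecMulVec [DecidableEq n] {𝕜 : Type*} [Field 𝕜] {K : Matrix n n 𝕜}
    (hK : IsUnit K) (t : 𝕜) (u w : n → 𝕜) (h : 1 + t * (w ⬝ᵥ K⁻¹ *ᵥ u) ≠ 0) :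
    (K + t • vecMulVec u w)⁻¹ =
      K⁻¹ - (t / (1 + t * (w ⬝ᵥ K⁻¹ *ᵥ u))) • vecMulVec (K⁻¹ *ᵥ u) (w ᵥ* K⁻¹) := by
  apply inv_eq_right_inv
  have hKK : K * K⁻¹ = 1 := mul_nonsing_inv K ((isUnit_iff_isUnit_det K).mp hK)
  set c := t / (1 + t * (w ⬝ᵥ K⁻¹ *ᵥ u))
  have hc : t - c - t * c * (w ⬝ᵥ K⁻¹ *ᵥ u) = 0 := by
    linear_combination -(div_mul_cancel₀ t h)
  calc (K + t • vecMulVec u w) * (K⁻¹ - c • vecMulVec (K⁻¹ *ᵥ u) (w ᵥ* K⁻¹))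
      = 1 + (t - c - t * c * (w ⬝ᵥ K⁻¹ *ᵥ u)) • vecMulVec u (w ᵥ* K⁻¹) := by
        rw [Matrix.add_mul, Matrix.mul_sub, Matrix.mul_sub]
        simp only [Matrix.mul_smul, Matrix.smul_mul, hKK, mul_vecMulVec, mulVec_mulVec,
          one_mulVec, vecMulVec_mul, smul_mulVec, vecMulVec_mulVec, op_smul_eq_smul,
          smul_vecMulVec, smul_smul, ← dotProduct_mulVec]
        module
    _ = 1 := by rw [hc, zero_smul, add_zero]

theorem tendsto_inv_add_smul_vecMulVec_self [DecidableEq n] {K : Matrix n n ℝ} (hK : K.PosDef)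
    {v : n → ℝ} (hv : v ≠ 0) :
    Tendsto (fun t : ℝ => (K + t • vecMulVec v v)⁻¹) atTop
      (𝓝 (K⁻¹ - (v ⬝ᵥ K⁻¹ *ᵥ v)⁻¹ • vecMulVec (K⁻¹ *ᵥ v) (K⁻¹ *ᵥ v))) := by
  have hs : 0 < v ⬝ᵥ K⁻¹ *ᵥ v := by simpa using hK.inv.dotProduct_mulVec_pos hv
  have hvK : v ᵥ* K⁻¹ = K⁻¹ *ᵥ v := by
    rw [← mulVec_transpose, (isHermitian_iff_isSymm.mp hK.inv.isHermitian).eq]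
  have hlim := (tendsto_div_one_add_mul_atTop hs.ne').smul_const
    (vecMulVec (K⁻¹ *ᵥ v) (K⁻¹ *ᵥ v))
  refine (tendsto_const_nhds.sub hlim).congr' ?_
  filter_upwards [eventually_ge_atTop 0] with t ht
  rw [inv_add_smul_vecMulVec hK.isUnit t v v (by positivity), hvK]

theorem mulVec_sub_smul_vecMulVec_eq_zero {𝕜 : Type*} [Field 𝕜] (W : Matrix n n 𝕜)
    {v : n → 𝕜} (hs : v ⬝ᵥ W *ᵥ v ≠ 0) :
    (W - (v ⬝ᵥ W *ᵥ v)⁻¹ • vecMulVec (W *ᵥ v) (W *ᵥ v)) *ᵥ v = 0 := by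
  rw [sub_mulVec, smul_mulVec, vecMulVec_mulVec, op_smul_eq_smul, smul_smul,
    dotProduct_comm (W *ᵥ v) v, inv_mul_cancel₀ hs, one_smul, sub_self]

theorem PosSemidef.sub_smul_vecMulVec {W : Matrix n n ℝ} (hW : W.PosSemidef) {v : n → ℝ}
    (hs : v ⬝ᵥ W *ᵥ v ≠ 0) :
    (W - (v ⬝ᵥ W *ᵥ v)⁻¹ • vecMulVec (W *ᵥ v) (W *ᵥ v)).PosSemidef := by
  have hWs : W.IsSymm := isHermitian_iff_isSymm.mp hW.isHermitian
  set s := v ⬝ᵥ W *ᵥ v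
  set u := W *ᵥ v
  have huu : (vecMulVec u u).IsSymm := transpose_vecMulVec u u
  refine PosSemidef.of_dotProduct_mulVec_nonneg
    (isHermitian_iff_isSymm.mpr (hWs.sub (huu.smul s⁻¹))) fun z => ?_
  have hvz : v ⬝ᵥ W *ᵥ z = u ⬝ᵥ z := by rw [hWs.dotProduct_mulVec_comm, dotProduct_comm]
  have hzv : z ⬝ᵥ W *ᵥ v = u ⬝ᵥ z := dotProduct_comm z u
  set w := z - (u ⬝ᵥ z / s) • v
  have hcompl : z ⬝ᵥ (W - s⁻¹ • vecMulVec u u) *ᵥ z = w ⬝ᵥ W *ᵥ w := by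
    simp only [w, sub_mulVec, smul_mulVec, vecMulVec_mulVec, op_smul_eq_smul, mulVec_sub,
      mulVec_smul, dotProduct_sub, sub_dotProduct, dotProduct_smul, smul_dotProduct, hvz, hzv,
      dotProduct_comm z u, smul_eq_mul]
    field_simp
    ring
  rw [star_trivial, hcompl]
  exact hW.dotProduct_mulVec_nonneg w

theorem sum_sum_sq_sub_mul_eq_of_mulVec_one_eq_zero {R : Type*} [CommRing R]
    {A : Matrix n n R} (hA : A.IsSymm) (h1 : A *ᵥ (fun _ => 1) = 0) (x : n → R) :
    ∑ i, ∑ j, (x i - x j) ^ 2 * A i j = -2 * (x ⬝ᵥ A *ᵥ x) := by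
  have hrow : ∀ i, ∑ j, A i j = 0 := fun i => by
    simpa [mulVec, dotProduct] using congrFun h1 i
  have hcol : ∀ j, ∑ i, A i j = 0 := fun j => by simpa only [hA.apply] using hrow j
  calc ∑ i, ∑ j, (x i - x j) ^ 2 * A i j
      = ∑ i, x i ^ 2 * ∑ j, A i j + ∑ j, x j ^ 2 * ∑ i, A i j
          - 2 * ∑ i, ∑ j, x i * A i j * x j := by
        have e : ∀ i j, (x i - x j) ^ 2 * A i j =
            x i ^ 2 * A i j + x j ^ 2 * A i j - 2 * (x i * A i j * x j) := fun i j => by ring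
        simp only [e, sum_add_distrib, sum_sub_distrib, mul_sum]
        rw [sum_comm (f := fun i j => x j ^ 2 * A i j)]
    _ = -2 * (x ⬝ᵥ A *ᵥ x) := by
        simp [hrow, hcol, dotProduct, mulVec, mul_sum, mul_assoc]

theorem PosSemidef.continuousAt_one_add_inv_mulVec [DecidableEq n] {A : Matrix n n ℝ}
    (hA : A.PosSemidef) (y : n → ℝ) : ContinuousAt (fun B => (1 + B)⁻¹ *ᵥ y) A :=
  (continuous_id.matrix_mulVec continuous_const).continuousAt.comp
    ((continuousAt_matrix_inv _ (NormedRing.inverse_continuousAt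
      (Units.mk0 _ (PosDef.one.add_posSemidef hA).det_pos.ne'))).comp
        (continuous_const.add continuous_id).continuousAt)

end Matrix

section PenalizedLeastSquares

variable {n : Type*} [Fintype n]

def penalizedLeastSquares (Q : Matrix n n ℝ) (y x : n → ℝ) : ℝ :=
  ∑ i, (x i - y i) ^ 2 + x ⬝ᵥ Q *ᵥ x

theorem penalizedLeastSquares_add [DecidableEq n] {Q : Matrix n n ℝ} (hQ : Q.IsSymm)
    (y c d : n → ℝ) :
    penalizedLeastSquares Q y (c + d) = penalizedLeastSquares Q y c
      + 2 * (d ⬝ᵥ ((1 + Q) *ᵥ c - y)) + (d ⬝ᵥ d + d ⬝ᵥ Q *ᵥ d) := by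
  have hsq : ∀ x, ∑ i, (x i - y i) ^ 2 = (x - y) ⬝ᵥ (x - y) := fun x => by
    simp [dotProduct, sq]
  rw [penalizedLeastSquares, penalizedLeastSquares, hsq, hsq,
    show c + d - y = (c - y) + d by abel]
  simp only [add_mulVec, one_mulVec, mulVec_add, add_dotProduct, dotProduct_add, dotProduct_sub,
    sub_dotProduct, hQ.dotProduct_mulVec_comm c d, dotProduct_comm c d, dotProduct_comm y d]
  ring

theorem penalizedLeastSquares_one_add_inv_mulVec_le [DecidableEq n] {Q : Matrix n n ℝ} (hQ : Q.PosSemidef)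
    (y x : n → ℝ) :
    penalizedLeastSquares Q y ((1 + Q)⁻¹ *ᵥ y) ≤ penalizedLeastSquares Q y x := by
  set c := (1 + Q)⁻¹ *ᵥ y
  have hc : (1 + Q) *ᵥ c = y := by
    rw [mulVec_mulVec, mul_nonsing_inv _ (PosDef.one.add_posSemidef hQ).det_pos.ne'.isUnit,
      one_mulVec]
  rw [show x = c + (x - c) by abel,
    penalizedLeastSquares_add (isHermitian_iff_isSymm.mp hQ.isHermitian), hc, sub_self,
    dotProduct_zero, mul_zero, add_zero, le_add_iff_nonneg_right]
  exact add_nonneg (dotProduct_self_star_nonneg _) (hQ.dotProduct_mulVec_nonneg _)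

theorem eq_inv_mulVec_of_forall_penalizedLeastSquares_lt [DecidableEq n] {Q : Matrix n n ℝ}
    (hQ : Q.PosSemidef) {y m : n → ℝ}
    (hm : ∀ x, x ≠ m → penalizedLeastSquares Q y m < penalizedLeastSquares Q y x) :
    m = (1 + Q)⁻¹ *ᵥ y := by
  by_contra h
  exact (hm _ (Ne.symm h)).not_ge (penalizedLeastSquares_one_add_inv_mulVec_le hQ y m)

end PenalizedLeastSquares

/-- Finite-dimensional form of Proposition 1: the unique minimizer of the
σ-regularized least-squares objective converges, as σ → ∞, to the unique
minimizer of the faithfulness-plus-robustness objective with precision matrix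
`A = K⁻¹ − (K⁻¹𝟏)(K⁻¹𝟏)ᵀ/(𝟏ᵀK⁻¹𝟏)`. -/
theorem regularized_minimizer_tendsto_pairwise_minimizer
    (M : ℕ) (hM : 1 ≤ M) (K : Matrix (Fin M) (Fin M) ℝ) (hK : K.PosDef)
    (y : Fin M → ℝ)
    (F : ℝ → (Fin M → ℝ) → ℝ)
    (hF : ∀ σ : ℝ, ∀ x : Fin M → ℝ,
      F σ x = (∑ i, (x i - y i) ^ 2) +
        x ⬝ᵥ ((K + σ ^ 2 • vecMulVec (fun _ => (1 : ℝ)) (fun _ => (1 : ℝ)))⁻¹).mulVec x)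
    (G : (Fin M → ℝ) → ℝ)
    (hG : ∀ x : Fin M → ℝ,
      G x = (∑ i, (x i - y i) ^ 2) -
        (1 / 2) * ∑ i, ∑ j, (x i - x j) ^ 2 *
          (K⁻¹ - ((fun _ => (1 : ℝ)) ⬝ᵥ K⁻¹.mulVec (fun _ => (1 : ℝ)))⁻¹ •
            vecMulVec (K⁻¹.mulVec (fun _ => (1 : ℝ))) (K⁻¹.mulVec (fun _ => (1 : ℝ)))) i j)
    (xσ : ℝ → (Fin M → ℝ))
    (hxσ : ∀ σ : ℝ, 0 < σ → ∀ x : Fin M → ℝ, x ≠ xσ σ → F σ (xσ σ) < F σ x)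
    (xG : Fin M → ℝ)
    (hxG : ∀ x : Fin M → ℝ, x ≠ xG → G xG < G x) :
    Tendsto xσ atTop (𝓝 xG) := by
  set one : Fin M → ℝ := fun _ => 1
  set A := K⁻¹ - (one ⬝ᵥ K⁻¹ *ᵥ one)⁻¹ • vecMulVec (K⁻¹ *ᵥ one) (K⁻¹ *ᵥ one)
  have hone : one ≠ 0 := Function.ne_iff.mpr ⟨⟨0, hM⟩, one_ne_zero⟩
  have hs : one ⬝ᵥ K⁻¹ *ᵥ one ≠ 0 := (hK.inv.dotProduct_mulVec_pos hone).ne'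
  have hA : A.PosSemidef := hK.inv.posSemidef.sub_smul_vecMulVec hs
  have hGA : G = penalizedLeastSquares A y := funext fun x => by
    rw [hG, sum_sum_sq_sub_mul_eq_of_mulVec_one_eq_zero
      (isHermitian_iff_isSymm.mp hA.isHermitian) (mulVec_sub_smul_vecMulVec_eq_zero _ hs),
      penalizedLeastSquares]
    ring
  have hxG_eq : xG = (1 + A)⁻¹ *ᵥ y :=
    eq_inv_mulVec_of_forall_penalizedLeastSquares_lt hA (hGA ▸ hxG)
  have hxσ_eq : ∀ᶠ σ in atTop, (1 + (K + σ ^ 2 • vecMulVec one one)⁻¹)⁻¹ *ᵥ y = xσ σ := by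
    filter_upwards [eventually_gt_atTop 0] with σ hσ
    have hpos : (K + σ ^ 2 • vecMulVec one one).PosDef :=
      hK.add_posSemidef ((posSemidef_vecMulVec_self_star one).smul (sq_nonneg σ))
    exact (eq_inv_mulVec_of_forall_penalizedLeastSquares_lt hpos.inv.posSemidef
      fun x hx => by simpa only [hF, penalizedLeastSquares] using hxσ σ hσ x hx).symm
  have hlim : Tendsto (fun σ : ℝ => (K + σ ^ 2 • vecMulVec one one)⁻¹) atTop (𝓝 A) :=
    (tendsto_inv_add_smul_vecMulVec_self hK hone).comp (tendsto_pow_atTop two_ne_zero)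
  rw [hxG_eq]
  exact ((hA.continuousAt_one_add_inv_mulVec y).tendsto.comp hlim).congr' hxσ_eq
end

section
/- Let M ≥ 1, let K be a symmetric positive definite real M×M matrix, let 𝟏 ∈ ℝ^M be the all-ones vector, and let A = K⁻¹ − (K⁻¹𝟏)(K⁻¹𝟏)ᵀ / (𝟏ᵀK⁻¹𝟏). Then for x ∈ ℝ^M one has Ax = 0 if and only if x is a scalar multiple of 𝟏; in particular A𝟏 = 0. -/
/-! With `v = K⁻¹u`, `limitPrecision K u` sends `x` to `K⁻¹x − c(x) v = K⁻¹(x − c(x) u)` for a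
scalar `c(x)`; as `K⁻¹` is injective, `x` is in the kernel iff `x = c(x) u`. For `u ≠ 0` positive
definiteness gives `uᵀK⁻¹u > 0`, whence `c(u) = 1` and `u` is in the kernel. -/

open Matrix

namespace Matrix

variable {ι 𝕜 : Type*} [Fintype ι] [DecidableEq ι]

/-- The σ² → ∞ limit of the marginal precision matrix when a common offset along `u` is given
an `N(0, σ²)` prior. -/
noncomputable def limitPrecision [Field 𝕜] (K : Matrix ι ι 𝕜) (u : ι → 𝕜) : Matrix ι ι 𝕜 :=
  K⁻¹ - (u ⬝ᵥ K⁻¹ *ᵥ u)⁻¹ • vecMulVec (K⁻¹ *ᵥ u) (K⁻¹ *ᵥ u)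

section Field

variable [Field 𝕜] (K : Matrix ι ι 𝕜) (u : ι → 𝕜)

theorem limitPrecision_mulVec (x : ι → 𝕜) :
    limitPrecision K u *ᵥ x =
      K⁻¹ *ᵥ x - ((u ⬝ᵥ K⁻¹ *ᵥ u)⁻¹ * (K⁻¹ *ᵥ u ⬝ᵥ x)) • K⁻¹ *ᵥ u := by
  rw [limitPrecision, sub_mulVec, smul_mulVec, vecMulVec_mulVec, op_smul_eq_smul, smul_smul]

variable {K u}

theorem exists_eq_smul_of_limitPrecision_mulVec_eq_zero (hK : IsUnit K) {x : ι → 𝕜}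
    (hx : limitPrecision K u *ᵥ x = 0) : ∃ c : 𝕜, x = c • u := by
  rw [limitPrecision_mulVec, sub_eq_zero, ← mulVec_smul] at hx
  have hKinv : Function.Injective (K⁻¹ *ᵥ ·) :=
    mulVec_injective_iff_isUnit.2 (isUnit_nonsing_inv_iff.2 hK)
  exact ⟨_, hKinv hx⟩

end Field

variable {K : Matrix ι ι ℝ} (hK : K.PosDef) (u : ι → ℝ)
include hK

theorem PosDef.limitPrecision_mulVec_self : limitPrecision K u *ᵥ u = 0 := by
  rcases eq_or_ne u 0 with rfl | hu
  · simp [limitPrecision]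
  have hs : u ⬝ᵥ K⁻¹ *ᵥ u ≠ 0 := (hK.inv.dotProduct_mulVec_pos hu).ne'
  rw [limitPrecision_mulVec, dotProduct_comm (K⁻¹ *ᵥ u), inv_mul_cancel₀ hs, one_smul, sub_self]

theorem PosDef.limitPrecision_mulVec_eq_zero_iff (x : ι → ℝ) :
    limitPrecision K u *ᵥ x = 0 ↔ ∃ c : ℝ, x = c • u := by
  refine ⟨exists_eq_smul_of_limitPrecision_mulVec_eq_zero hK.isUnit, ?_⟩
  rintro ⟨c, rfl⟩
  rw [mulVec_smul, hK.limitPrecision_mulVec_self, smul_zero]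

end Matrix

theorem limit_precision_matrix_kernel_general
    (M : ℕ) (K : Matrix (Fin M) (Fin M) ℝ) (hK : K.PosDef) :
    (∀ x : Fin M → ℝ,
      (K⁻¹ - ((fun _ => (1 : ℝ)) ⬝ᵥ K⁻¹.mulVec (fun _ => (1 : ℝ)))⁻¹ •
        vecMulVec (K⁻¹.mulVec (fun _ => (1 : ℝ))) (K⁻¹.mulVec (fun _ => (1 : ℝ)))).mulVec x = 0 ↔
      ∃ c : ℝ, x = c • (fun _ => (1 : ℝ))) ∧
    (K⁻¹ - ((fun _ => (1 : ℝ)) ⬝ᵥ K⁻¹.mulVec (fun _ => (1 : ℝ)))⁻¹ •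
        vecMulVec (K⁻¹.mulVec (fun _ => (1 : ℝ))) (K⁻¹.mulVec (fun _ => (1 : ℝ)))).mulVec
      (fun _ => (1 : ℝ)) = 0 :=
  ⟨hK.limitPrecision_mulVec_eq_zero_iff 1, hK.limitPrecision_mulVec_self 1⟩

/-- The null space of `A = K⁻¹ − (K⁻¹𝟏)(K⁻¹𝟏)ᵀ/(𝟏ᵀK⁻¹𝟏)` is exactly the span of
the all-ones vector; in particular `A𝟏 = 0`. -/
theorem limit_precision_matrix_kernel
    (M : ℕ) (hM : 1 ≤ M) (K : Matrix (Fin M) (Fin M) ℝ) (hK : K.PosDef) :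
    (∀ x : Fin M → ℝ,
      (K⁻¹ - ((fun _ => (1 : ℝ)) ⬝ᵥ K⁻¹.mulVec (fun _ => (1 : ℝ)))⁻¹ •
        vecMulVec (K⁻¹.mulVec (fun _ => (1 : ℝ))) (K⁻¹.mulVec (fun _ => (1 : ℝ)))).mulVec x = 0 ↔
      ∃ c : ℝ, x = c • (fun _ => (1 : ℝ))) ∧
    (K⁻¹ - ((fun _ => (1 : ℝ)) ⬝ᵥ K⁻¹.mulVec (fun _ => (1 : ℝ)))⁻¹ •
        vecMulVec (K⁻¹.mulVec (fun _ => (1 : ℝ))) (K⁻¹.mulVec (fun _ => (1 : ℝ)))).mulVec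
      (fun _ => (1 : ℝ)) = 0 :=
  limit_precision_matrix_kernel_general M K hK
end

section
/- Let M ≥ 1, let K be a symmetric positive definite real M×M matrix, let 𝟏 ∈ ℝ^M be the all-ones vector, and let A = K⁻¹ − (K⁻¹𝟏)(K⁻¹𝟏)ᵀ / (𝟏ᵀK⁻¹𝟏). Then for x ∈ ℝ^M, xᵀAx = 0 if and only if x is a scalar multiple of 𝟏. -/
/-!
Completing the square in the direction of `𝟏` gives `xᵀAx = zᵀK⁻¹z` with
`z = x − c𝟏`, `c = 𝟏ᵀK⁻¹x / 𝟏ᵀK⁻¹𝟏`; since `K⁻¹` is positive definite this vanishes iff `z = 0`.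
Conversely `A` kills the quadratic form on `𝟏` itself, hence on all its multiples.
-/

open Matrix

namespace Matrix

variable {ι 𝕜 : Type*} [Fintype ι]

section Field

variable [Field 𝕜]

/-- With `B = K⁻¹` and `u = 𝟏` this is the matrix `A` of the statement. -/
noncomputable def deflation (B : Matrix ι ι 𝕜) (u : ι → 𝕜) : Matrix ι ι 𝕜 :=
  B - (u ⬝ᵥ B *ᵥ u)⁻¹ • vecMulVec (B *ᵥ u) (B *ᵥ u)

lemma IsSymm.dotProduct_mulVec_comm_s18 {B : Matrix ι ι 𝕜} (hB : B.IsSymm) (v w : ι → 𝕜) :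
    v ⬝ᵥ B *ᵥ w = w ⬝ᵥ B *ᵥ v := by
  rw [dotProduct_mulVec, ← mulVec_transpose, hB.eq, dotProduct_comm]

lemma dotProduct_deflation_mulVec (B : Matrix ι ι 𝕜) (u x : ι → 𝕜) :
    x ⬝ᵥ deflation B u *ᵥ x = x ⬝ᵥ B *ᵥ x - (u ⬝ᵥ B *ᵥ u)⁻¹ * (B *ᵥ u ⬝ᵥ x) ^ 2 := by
  rw [deflation, sub_mulVec, smul_mulVec, vecMulVec_mulVec, op_smul_eq_smul, dotProduct_sub,
    dotProduct_smul, dotProduct_smul, dotProduct_comm x (B *ᵥ u), smul_eq_mul, smul_eq_mul, sq]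

lemma dotProduct_deflation_mulVec_smul_self (B : Matrix ι ι 𝕜) (u : ι → 𝕜) (c : 𝕜) :
    c • u ⬝ᵥ deflation B u *ᵥ (c • u) = 0 := by
  rw [dotProduct_deflation_mulVec, mulVec_smul, dotProduct_smul, smul_dotProduct, dotProduct_smul,
    dotProduct_comm (B *ᵥ u), smul_eq_mul, smul_eq_mul]
  linear_combination (-c ^ 2) * inv_mul_mul_self (u ⬝ᵥ B *ᵥ u)

lemma IsSymm.dotProduct_deflation_mulVec_eq {B : Matrix ι ι 𝕜} (hB : B.IsSymm) {u : ι → 𝕜}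
    (hu : u ⬝ᵥ B *ᵥ u ≠ 0) (x : ι → 𝕜) :
    x ⬝ᵥ deflation B u *ᵥ x =
      (x - ((u ⬝ᵥ B *ᵥ x) / (u ⬝ᵥ B *ᵥ u)) • u) ⬝ᵥ B *ᵥ (x - ((u ⬝ᵥ B *ᵥ x) / (u ⬝ᵥ B *ᵥ u)) • u) := by
  have hux : B *ᵥ u ⬝ᵥ x = u ⬝ᵥ B *ᵥ x := by
    rw [dotProduct_comm, hB.dotProduct_mulVec_comm_s18]
  rw [dotProduct_deflation_mulVec, hux, mulVec_sub, mulVec_smul, sub_dotProduct, dotProduct_sub,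
    dotProduct_sub, smul_dotProduct, smul_dotProduct, dotProduct_smul, dotProduct_smul,
    hB.dotProduct_mulVec_comm_s18 x u]
  simp only [smul_eq_mul]
  field_simp
  ring

end Field

lemma PosDef.eq_zero_of_dotProduct_mulVec_self_eq_zero {B : Matrix ι ι ℝ} (hB : B.PosDef)
    {x : ι → ℝ} (hx : x ⬝ᵥ B *ᵥ x = 0) : x = 0 := by
  by_contra hx0
  simpa [hx] using hB.dotProduct_mulVec_pos hx0

lemma PosDef.dotProduct_deflation_mulVec_eq_zero_iff {B : Matrix ι ι ℝ} (hB : B.PosDef)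
    (u x : ι → ℝ) : x ⬝ᵥ deflation B u *ᵥ x = 0 ↔ ∃ c : ℝ, x = c • u := by
  refine ⟨fun h => ?_, fun ⟨c, hc⟩ => hc ▸ dotProduct_deflation_mulVec_smul_self B u c⟩
  obtain rfl | hu := eq_or_ne u 0
  · refine ⟨0, hB.eq_zero_of_dotProduct_mulVec_self_eq_zero ?_ |>.trans (smul_zero 0).symm⟩
    simpa [deflation] using h
  have hs : u ⬝ᵥ B *ᵥ u ≠ 0 := by simpa using (hB.dotProduct_mulVec_pos hu).ne'
  rw [(isHermitian_iff_isSymm.mp hB.isHermitian).dotProduct_deflation_mulVec_eq hs] at h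
  exact ⟨_, sub_eq_zero.mp (hB.eq_zero_of_dotProduct_mulVec_self_eq_zero h)⟩

end Matrix

theorem limit_precision_quadratic_form_eq_zero_iff_general
    (M : ℕ) (K : Matrix (Fin M) (Fin M) ℝ) (hK : K.PosDef)
    (x : Fin M → ℝ) :
    x ⬝ᵥ (K⁻¹ - ((fun _ => (1 : ℝ)) ⬝ᵥ K⁻¹.mulVec (fun _ => (1 : ℝ)))⁻¹ •
        vecMulVec (K⁻¹.mulVec (fun _ => (1 : ℝ))) (K⁻¹.mulVec (fun _ => (1 : ℝ)))).mulVec x = 0 ↔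
    ∃ c : ℝ, x = c • (fun _ => (1 : ℝ)) :=
  hK.inv.dotProduct_deflation_mulVec_eq_zero_iff _ x

/-- The quadratic form of `A = K⁻¹ − (K⁻¹𝟏)(K⁻¹𝟏)ᵀ/(𝟏ᵀK⁻¹𝟏)` vanishes exactly
on the constant explanations, i.e. the scalar multiples of the all-ones vector. -/
theorem limit_precision_quadratic_form_eq_zero_iff
    (M : ℕ) (hM : 1 ≤ M) (K : Matrix (Fin M) (Fin M) ℝ) (hK : K.PosDef)
    (x : Fin M → ℝ) :
    x ⬝ᵥ (K⁻¹ - ((fun _ => (1 : ℝ)) ⬝ᵥ K⁻¹.mulVec (fun _ => (1 : ℝ)))⁻¹ •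
        vecMulVec (K⁻¹.mulVec (fun _ => (1 : ℝ))) (K⁻¹.mulVec (fun _ => (1 : ℝ)))).mulVec x = 0 ↔
    ∃ c : ℝ, x = c • (fun _ => (1 : ℝ)) :=
  limit_precision_quadratic_form_eq_zero_iff_general M K hK x
end
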